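/- Let p > 0, γ > 1 and β ∈ ℝ. Then lim_{η → 1^+} C*_{β,γ,p,η} / C*_{β,1,p,η} = 0; i.e., the acceptance probability of the rejection algorithm which simulates from m♯_{β,γ,p,η} using proposals from m♯_{β,1,p,η} tends to 0 as η ↓ 1. -/

import Mathlib

open MeasureTheory Set Filter

/-- `C*_{β,γ,p,η} = ∫_1^η θ⁻¹ ∫_{1/θ}^1 (1-u^p)^(γ-1) u^(-1-β) du dθ`. -/
noncomputable def Cstar (β γ p η : ℝ) : ℝ :=
  ∫ θ in (1:ℝ)..η, θ⁻¹ * ∫ u in (1/θ)..(1:ℝ), (1 - u ^ p) ^ (γ - 1) * u ^ (-1 - β)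

/-!
For `u ∈ [η⁻¹, 1]` the factor `(1 - u^p)^(γ-1)` is at most `(1 - η^(-p))^(γ-1)`, and every `u`
occurring in `C*_{β,γ,p,η}` lies in that range. Hence `C*_{β,γ,p,η} ≤ (1 - η^(-p))^(γ-1) C*_{β,1,p,η}`,
and the factor tends to `0` as `η ↓ 1` because `γ > 1`.
-/

noncomputable def dilationIntegral (f : ℝ → ℝ) (η : ℝ) : ℝ :=
  ∫ θ in (1:ℝ)..η, θ⁻¹ * ∫ u in (1/θ)..(1:ℝ), f u

section DilationIntegral

variable {f g : ℝ → ℝ} {η : ℝ}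

lemma one_div_mem_Icc_inv {θ : ℝ} (hθ : θ ∈ Icc 1 η) : 1 / θ ∈ Icc η⁻¹ 1 := by
  have hθ0 : 0 < θ := one_pos.trans_le hθ.1
  rw [one_div]
  exact ⟨inv_anti₀ hθ0 hθ.2, inv_le_one_of_one_le₀ hθ.1⟩

lemma continuousOn_inv_mul_integral_one_div (hf : ContinuousOn f (Icc η⁻¹ 1)) (hη : 1 ≤ η) :
    ContinuousOn (fun θ => θ⁻¹ * ∫ u in (1/θ)..(1:ℝ), f u) (Icc 1 η) := by
  have hη' : η⁻¹ ≤ 1 := inv_le_one_of_one_le₀ hη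
  have hprim : ContinuousOn (fun x => ∫ u in x..(1:ℝ), f u) (Icc η⁻¹ 1) := by
    rw [← uIcc_of_le hη'] at hf ⊢
    exact intervalIntegral.continuousOn_primitive_interval_left hf.integrableOn_uIcc
  have hne : ∀ θ ∈ Icc 1 η, θ ≠ 0 := fun θ hθ => (one_pos.trans_le hθ.1).ne'
  exact (continuousOn_id.inv₀ hne).mul <| hprim.comp (continuousOn_const.div continuousOn_id hne)
    fun θ hθ => one_div_mem_Icc_inv hθ

lemma intervalIntegrable_inv_mul_integral_one_div (hf : ContinuousOn f (Icc η⁻¹ 1))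
    (hη : 1 ≤ η) :
    IntervalIntegrable (fun θ => θ⁻¹ * ∫ u in (1/θ)..(1:ℝ), f u) volume 1 η :=
  (continuousOn_inv_mul_integral_one_div hf hη).intervalIntegrable_of_Icc hη

lemma dilationIntegral_mono (hf : ContinuousOn f (Icc η⁻¹ 1)) (hg : ContinuousOn g (Icc η⁻¹ 1))
    (hfg : ∀ u ∈ Icc η⁻¹ 1, f u ≤ g u) (hη : 1 ≤ η) :
    dilationIntegral f η ≤ dilationIntegral g η := by
  refine intervalIntegral.integral_mono_on hη (intervalIntegrable_inv_mul_integral_one_div hf hη)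
    (intervalIntegrable_inv_mul_integral_one_div hg hη) fun θ hθ => ?_
  have hθ' := one_div_mem_Icc_inv hθ
  have hsub : Icc (1 / θ) 1 ⊆ Icc η⁻¹ 1 := Icc_subset_Icc_left hθ'.1
  refine mul_le_mul_of_nonneg_left ?_ (inv_nonneg.2 (zero_le_one.trans hθ.1))
  exact intervalIntegral.integral_mono_on hθ'.2 ((hf.mono hsub).intervalIntegrable_of_Icc hθ'.2)
    ((hg.mono hsub).intervalIntegrable_of_Icc hθ'.2) fun u hu => hfg u (hsub hu)

lemma dilationIntegral_const_mul (c : ℝ) (f : ℝ → ℝ) (η : ℝ) :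
    dilationIntegral (fun u => c * f u) η = c * dilationIntegral f η := by
  simp only [dilationIntegral, intervalIntegral.integral_const_mul, mul_left_comm _ c]

lemma dilationIntegral_zero (η : ℝ) : dilationIntegral (fun _ => 0) η = 0 := by
  simp [dilationIntegral]

end DilationIntegral

noncomputable def msharpWeight (β γ p u : ℝ) : ℝ :=
  (1 - u ^ p) ^ (γ - 1) * u ^ (-1 - β)

lemma Cstar_eq_dilationIntegral (β γ p η : ℝ) :
    Cstar β γ p η = dilationIntegral (msharpWeight β γ p) η := rfl

section MsharpWeight

variable {β γ p : ℝ}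

lemma msharpWeight_one (β p u : ℝ) : msharpWeight β 1 p u = u ^ (-1 - β) := by
  simp [msharpWeight]

lemma continuousOn_msharpWeight (hγ : 1 ≤ γ) : ContinuousOn (msharpWeight β γ p) (Ioi 0) :=
  fun _ hu => ContinuousAt.continuousWithinAt <|
    ((continuousAt_const.sub (Real.continuousAt_rpow_const _ p (.inl (ne_of_gt hu)))).rpow_const
      (.inr (by linarith))).mul (Real.continuousAt_rpow_const _ _ (.inl (ne_of_gt hu)))

lemma continuousOn_Icc_msharpWeight (hγ : 1 ≤ γ) {η : ℝ} (hη : 0 < η) :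
    ContinuousOn (msharpWeight β γ p) (Icc η⁻¹ 1) :=
  (continuousOn_msharpWeight hγ).mono fun _ hu => (inv_pos.2 hη).trans_le hu.1

lemma msharpWeight_nonneg (hp : 0 ≤ p) {u : ℝ} (hu : u ∈ Ioc 0 1) : 0 ≤ msharpWeight β γ p u :=
  mul_nonneg (Real.rpow_nonneg (sub_nonneg.2 (Real.rpow_le_one hu.1.le hu.2 hp)) _)
    (Real.rpow_nonneg hu.1.le _)

lemma msharpWeight_le (hp : 0 ≤ p) (hγ : 1 ≤ γ) {η u : ℝ} (hη : 0 < η) (hu : u ∈ Icc η⁻¹ 1) :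
    msharpWeight β γ p u ≤ (1 - η ^ (-p)) ^ (γ - 1) * msharpWeight β 1 p u := by
  have hu0 : 0 < u := (inv_pos.2 hη).trans_le hu.1
  have hlow : η ^ (-p) ≤ u ^ p := by
    rw [Real.rpow_neg hη.le, ← Real.inv_rpow hη.le]
    exact Real.rpow_le_rpow (inv_nonneg.2 hη.le) hu.1 hp
  have hhigh : u ^ p ≤ 1 := Real.rpow_le_one hu0.le hu.2 hp
  rw [msharpWeight, msharpWeight_one]
  exact mul_le_mul_of_nonneg_right
    (Real.rpow_le_rpow (by linarith) (by linarith) (by linarith)) (Real.rpow_nonneg hu0.le _)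

end MsharpWeight

lemma Cstar_nonneg {β γ p η : ℝ} (hp : 0 ≤ p) (hγ : 1 ≤ γ) (hη : 1 ≤ η) :
    0 ≤ Cstar β γ p η := by
  have hη0 : 0 < η := one_pos.trans_le hη
  rw [Cstar_eq_dilationIntegral, ← dilationIntegral_zero η]
  exact dilationIntegral_mono continuousOn_const (continuousOn_Icc_msharpWeight hγ hη0)
    (fun u hu => msharpWeight_nonneg hp ⟨(inv_pos.2 hη0).trans_le hu.1, hu.2⟩) hη

lemma Cstar_le_mul_Cstar_one {β γ p η : ℝ} (hp : 0 ≤ p) (hγ : 1 ≤ γ) (hη : 1 ≤ η) :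
    Cstar β γ p η ≤ (1 - η ^ (-p)) ^ (γ - 1) * Cstar β 1 p η := by
  have hη0 : 0 < η := one_pos.trans_le hη
  rw [Cstar_eq_dilationIntegral, Cstar_eq_dilationIntegral, ← dilationIntegral_const_mul]
  exact dilationIntegral_mono (continuousOn_Icc_msharpWeight hγ hη0)
    (continuousOn_const.mul (continuousOn_Icc_msharpWeight le_rfl hη0))
    (fun u hu => msharpWeight_le hp hγ hη0 hu) hη

lemma tendsto_one_sub_rpow_neg_rpow {p γ : ℝ} (hγ : 1 < γ) :
    Tendsto (fun η : ℝ => (1 - η ^ (-p)) ^ (γ - 1)) (nhdsWithin 1 (Ioi 1)) (nhds 0) := by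
  have hcont : ContinuousAt (fun η : ℝ => (1 - η ^ (-p)) ^ (γ - 1)) 1 :=
    (continuousAt_const.sub (Real.continuousAt_rpow_const _ _ (.inl one_ne_zero))).rpow_const
      (.inr (by linarith))
  have hval : (1 - (1:ℝ) ^ (-p)) ^ (γ - 1) = 0 := by
    rw [Real.one_rpow, sub_self, Real.zero_rpow (by linarith)]
  simpa only [hval] using hcont.tendsto.mono_left nhdsWithin_le_nhds

theorem msharp_acceptance_limit (p γ β : ℝ) (hp : 0 < p) (hγ : 1 < γ) :
    Tendsto (fun η : ℝ => Cstar β γ p η / Cstar β 1 p η)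
      (nhdsWithin 1 (Ioi 1)) (nhds 0) := by
  refine tendsto_of_tendsto_of_tendsto_of_le_of_le' tendsto_const_nhds
    (tendsto_one_sub_rpow_neg_rpow (p := p) hγ) ?_ ?_ <;>
    filter_upwards [self_mem_nhdsWithin] with η (hη : 1 < η)
  · exact div_nonneg (Cstar_nonneg hp.le hγ.le hη.le) (Cstar_nonneg hp.le le_rfl hη.le)
  · rcases (Cstar_nonneg (β := β) hp.le le_rfl hη.le).eq_or_lt with hzero | hpos
    · rw [← hzero, div_zero]
      exact Real.rpow_nonneg (sub_nonneg.2 (Real.rpow_le_one_of_one_le_of_nonpos hη.le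
        (neg_nonpos.2 hp.le))) _
    · exact (div_le_iff₀ hpos).2 (Cstar_le_mul_Cstar_one hp.le hγ.le hη.le)
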